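/- In the finite Bayesian setting, if the acquisition value at input x vanishes for the strictly convex G and equals zero for all test points x', i.e., Σ_y p̄(y|x) G(p̄_y(·|x')) = G(p̄(·|x')) for all x', then for every y with p̄(y|x) > 0 and every x', the updated predictive equals the current predictive: p̄_y(·|x') = p̄(·|x'). -/

import Mathlib

open Finset Real

def probSimplex (Y : Type*) [Fintype Y] : Set (Y → ℝ) :=
  {q | (∀ y, 0 ≤ q y) ∧ ∑ y, q y = 1}

/-! Conditioning on the label `y` of `x` splits the prior predictive at any `x'` into the
posterior predictives, weighted by the marginal `p̄(y | x)`: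
`p̄(· | x') = ∑ y, p̄(y | x) • p̄_y(· | x')`. A vanishing BEMPS score is then the equality case of
Jensen's inequality for the strictly convex `G`, which forces every posterior predictive with
positive weight to coincide with the mixture `p̄(· | x')`. -/

theorem StrictConvexOn.eq_sum_smul_of_sum_mul_eq {ι E : Type*} [Fintype ι] [AddCommGroup E]
    [Module ℝ E] {s : Set E} {f : E → ℝ} (hf : StrictConvexOn ℝ s f) {a : ι → ℝ} {q : ι → E}
    (ha : ∀ i, 0 ≤ a i) (ha₁ : ∑ i, a i = 1) (hq : ∀ i, 0 < a i → q i ∈ s)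
    (heq : ∑ i, a i * f (q i) = f (∑ i, a i • q i)) {i : ι} (hi : 0 < a i) :
    q i = ∑ j, a j • q j := by
  have hpos_of_ne {j : ι} (hj : a j ≠ 0) : 0 < a j := (ha j).lt_of_ne' hj
  have hsmul : ∑ j with 0 < a j, a j • q j = ∑ j, a j • q j :=
    sum_filter_of_ne fun j _ hj => hpos_of_ne (left_ne_zero_of_smul hj)
  have hmul : ∑ j with 0 < a j, a j • f (q j) = ∑ j, a j * f (q j) :=
    sum_filter_of_ne fun j _ hj => hpos_of_ne (left_ne_zero_of_mul hj)
  have hsum : ∑ j with 0 < a j, a j = 1 :=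
    (sum_filter_of_ne fun j _ hj => hpos_of_ne hj).trans ha₁
  have hjensen := (hf.map_sum_eq_iff (t := {j | 0 < a j}) (by simp) hsum
    (by simpa using hq)).1 (by rw [hsmul, hmul, heq]) i (by simpa using hi)
  rwa [hsmul] at hjensen

namespace Bayes

def mixture {Θ Y : Type*} [Fintype Θ] (w : Θ → ℝ) (r : Θ → Y → ℝ) : Y → ℝ :=
  fun z => ∑ θ, w θ * r θ z

noncomputable def posterior {Θ : Type*} [Fintype Θ] (w l : Θ → ℝ) : Θ → ℝ :=
  fun θ => w θ * l θ / ∑ θ', w θ' * l θ'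

variable {Θ : Type*} [Fintype Θ]

theorem mixture_mem_probSimplex {Y : Type*} [Fintype Y] {w : Θ → ℝ} {r : Θ → Y → ℝ}
    (hw : w ∈ probSimplex Θ) (hr : ∀ θ, r θ ∈ probSimplex Y) :
    mixture w r ∈ probSimplex Y := by
  refine ⟨fun z => sum_nonneg fun θ _ => mul_nonneg (hw.1 θ) ((hr θ).1 z), ?_⟩
  simp only [mixture]
  rw [sum_comm]
  simp only [← mul_sum, (hr _).2, mul_one, hw.2]

theorem posterior_mem_probSimplex {w l : Θ → ℝ} (hw : ∀ θ, 0 ≤ w θ) (hl : ∀ θ, 0 ≤ l θ)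
    (hwl : 0 < ∑ θ, w θ * l θ) : posterior w l ∈ probSimplex Θ :=
  ⟨fun θ => div_nonneg (mul_nonneg (hw θ) (hl θ)) hwl.le, by
    simp only [posterior, ← sum_div, div_self hwl.ne']⟩

/-- The identity holds also when the evidence `∑ θ, w θ * l θ` vanishes, where the posterior
is the junk value `0`, because then every `w θ * l θ` vanishes. -/
theorem sum_mul_posterior {w l : Θ → ℝ} (hw : ∀ θ, 0 ≤ w θ) (hl : ∀ θ, 0 ≤ l θ) (θ : Θ) :
    (∑ θ', w θ' * l θ') * posterior w l θ = w θ * l θ := by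
  by_cases h : ∑ θ', w θ' * l θ' = 0
  · rw [h, zero_mul, eq_comm]
    exact (sum_eq_zero_iff_of_nonneg fun θ _ => mul_nonneg (hw θ) (hl θ)).1 h θ (mem_univ θ)
  · exact mul_div_cancel₀ _ h

/-- Law of total probability, conditioning on a label `y ~ p`. -/
theorem sum_smul_mixture_posterior {Y Z : Type*} [Fintype Y] {w : Θ → ℝ}
    {p : Θ → Y → ℝ} (hw : ∀ θ, 0 ≤ w θ) (hp : ∀ θ, p θ ∈ probSimplex Y) (r : Θ → Z → ℝ) :
    ∑ y, mixture w p y • mixture (posterior w fun θ => p θ y) r = mixture w r := by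
  funext z
  have hjoint (y : Y) :
      mixture w p y * mixture (posterior w fun θ => p θ y) r z
        = ∑ θ, w θ * r θ z * p θ y := by
    simp only [mixture, mul_sum, ← mul_assoc, sum_mul_posterior hw (fun θ => (hp θ).1 y)]
    exact sum_congr rfl fun θ _ => by ring
  simp only [Finset.sum_apply, Pi.smul_apply, smul_eq_mul, hjoint]
  rw [sum_comm]
  simp only [mixture, ← mul_sum, (hp _).2, mul_one]

end Bayes

open Bayes in
theorem bemps_zero_no_change_general {Y : Type*} [Fintype Y] {Θ : Type*} [Fintype Θ]
    {X : Type*} [Fintype X]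
    (w : Θ → ℝ) (hw : (∀ θ, 0 ≤ w θ) ∧ ∑ θ, w θ = 1)
    (p : Θ → X → Y → ℝ) (hp : ∀ θ x, p θ x ∈ probSimplex Y)
    (x : X)
    (G : (Y → ℝ) → ℝ) (hG : StrictConvexOn ℝ (probSimplex Y) G)
    (hzero : ∀ x' : X,
      ∑ y, (∑ θ, w θ * p θ x y) *
          G (fun z => ∑ θ, (w θ * p θ x y / (∑ θ', w θ' * p θ' x y)) * p θ x' z)
        = G (fun z => ∑ θ, w θ * p θ x' z)) :
    ∀ y, 0 < (∑ θ, w θ * p θ x y) → ∀ x' : X,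
      (fun z => ∑ θ, (w θ * p θ x y / (∑ θ', w θ' * p θ' x y)) * p θ x' z)
        = (fun z => ∑ θ, w θ * p θ x' z) := by
  intro y hy x'
  have hmarginal : mixture w (p · x) ∈ probSimplex Y := mixture_mem_probSimplex hw (hp · x)
  have htotal := sum_smul_mixture_posterior hw.1 (hp · x) (p · x')
  have hjensen := hG.eq_sum_smul_of_sum_mul_eq hmarginal.1 hmarginal.2
    (fun y hy => mixture_mem_probSimplex
      (posterior_mem_probSimplex hw.1 (fun θ => (hp θ x).1 y) hy) (hp · x'))
    (by rw [htotal]; exact hzero x') hy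
  rwa [htotal] at hjensen

/-- If the BEMPS acquisition value at `x` vanishes for all test points `x'`, then
    observing the label at `x` cannot change any prediction. -/
theorem bemps_zero_no_change {Y : Type*} [Fintype Y] {Θ : Type*} [Fintype Θ]
    {X : Type*} [Fintype X]
    (w : Θ → ℝ) (hw : (∀ θ, 0 ≤ w θ) ∧ ∑ θ, w θ = 1)
    (p : Θ → X → Y → ℝ) (hp : ∀ θ x, p θ x ∈ probSimplex Y)
    (x : X) (hpos : ∀ y, 0 < ∑ θ, w θ * p θ x y)
    (G : (Y → ℝ) → ℝ) (hG : StrictConvexOn ℝ (probSimplex Y) G)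
    (hzero : ∀ x' : X,
      ∑ y, (∑ θ, w θ * p θ x y) *
          G (fun z => ∑ θ, (w θ * p θ x y / (∑ θ', w θ' * p θ' x y)) * p θ x' z)
        = G (fun z => ∑ θ, w θ * p θ x' z)) :
    ∀ y, 0 < (∑ θ, w θ * p θ x y) → ∀ x' : X,
      (fun z => ∑ θ, (w θ * p θ x y / (∑ θ', w θ' * p θ' x y)) * p θ x' z)
        = (fun z => ∑ θ, w θ * p θ x' z) :=
  bemps_zero_no_change_general w hw p hp x G hG hzero
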